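/- arXiv:2401.06241 — 12 statements merged into one kernel-verified Lean document; each statement's English description precedes it below -/
import Mathlib

section
/- Let R and S be Lie rings and α : R → S a bijection preserving commutators, i.e., α([x,y]) = [α(x), α(y)] for all x, y ∈ R. If a, b ∈ R satisfy C(a) ∩ C(b) = {0}, where C(x) denotes the centralizer of x in R, then α(a + b) = α(a) + α(b). -/
theorem stmt_2 (R S : Type*) [LieRing R] [LieRing S] (α : R → S)
    (hbij : Function.Bijective α)
    (hα : ∀ x y : R, α ⁅x, y⁆ = ⁅α x, α y⁆)
    (a b : R) (hC : ∀ c : R, ⁅a, c⁆ = 0 → ⁅b, c⁆ = 0 → c = 0) :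
    α (a + b) = α a + α b := by
  obtain ⟨d, hd⟩ := hbij.2 (α a + α b)
  have hda : ⁅d, a⁆ = ⁅b, a⁆ := by
    apply hbij.1
    rw [hα, hα, hd]
    simp [add_lie]
  have hdb : ⁅d, b⁆ = ⁅a, b⁆ := by
    apply hbij.1
    rw [hα, hα, hd]
    simp [add_lie]
  have h1 : ⁅a, a + b - d⁆ = 0 := by
    have : ⁅a, d⁆ = ⁅a, b⁆ := by rw [← lie_skew, hda, lie_skew]
    simp [lie_add, lie_sub, this]
  have h2 : ⁅b, a + b - d⁆ = 0 := by
    have : ⁅b, d⁆ = ⁅b, a⁆ := by rw [← lie_skew, hdb, lie_skew]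
    simp [lie_add, lie_sub, this]
  have h3 := hC _ h1 h2
  rw [sub_eq_zero.mp h3, hd]
end

section
/- Let R be a noncommutative Lie ring such that there exists a nonzero element z ∈ Z(R) ∩ [R, R] and an element a ∉ [R, R]. Then the map α : R → R defined by α(a) = a + z, α(a + z) = a, and α(x) = x otherwise, is a commutator-preserving bijection. If moreover |R| > 4, then α is not additive, so R is not a UA-Lie ring. -/
/-!
The map `α` is the transposition of `a` and `a + z`, so it moves every element by a central
element and therefore leaves all brackets unchanged; a bracket lies in `[R, R]`, which contains
neither `a` nor `a + z`, so `α` also fixes it. If `α` were additive, then `α (a + b) = α a + α b`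
forces `z = 0` for every `b ∉ {0, z, a, a + z}`, so `R` would have at most four elements.
-/

section LieRing

variable {R : Type*} [LieRing R]

theorem lie_apply_apply_eq_of_lie_sub_self_eq_zero {f : R → R}
    (hf : ∀ x y : R, ⁅f x - x, y⁆ = 0) (x y : R) : ⁅f x, f y⁆ = ⁅x, y⁆ := by
  have hleft : ∀ u v : R, ⁅f u, v⁆ = ⁅u, v⁆ := fun u v =>
    sub_eq_zero.mp (by rw [← sub_lie]; exact hf u v)
  rw [hleft, ← lie_skew, hleft, lie_skew]

theorem lie_swap_add_sub_self_eq_zero [DecidableEq R] {z : R} (hz : ∀ y : R, ⁅z, y⁆ = 0)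
    (a x y : R) :
    ⁅Equiv.swap a (a + z) x - x, y⁆ = 0 := by
  rw [Equiv.swap_apply_def]
  split_ifs with ha haz
  · rw [ha, add_sub_cancel_left, hz]
  · rw [haz, sub_add_cancel_left, neg_lie, hz, neg_zero]
  · rw [sub_self, zero_lie]

end LieRing

theorem mk_le_four_of_swap_add_map_add {G : Type*} [AddGroup G] [DecidableEq G] {a z : G}
    (hz : z ≠ 0)
    (hadd : ∀ x y : G, Equiv.swap a (a + z) (x + y) =
      Equiv.swap a (a + z) x + Equiv.swap a (a + z) y) :
    Cardinal.mk G ≤ 4 := by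
  have hmem : ∀ b : G, b = 0 ∨ b = z ∨ b = a ∨ b = a + z := by
    intro b
    by_contra! hb
    obtain ⟨hb0, hbz, hba, hbaz⟩ := hb
    have hab : a + b ≠ a := fun h => hb0 (add_eq_left.mp h)
    have habz : a + b ≠ a + z := fun h => hbz (add_left_cancel h)
    have h := hadd a b
    rw [Equiv.swap_apply_of_ne_of_ne hab habz, Equiv.swap_apply_left,
      Equiv.swap_apply_of_ne_of_ne hba hbaz] at h
    exact hz (add_eq_left.mp (add_right_cancel h).symm)
  calc Cardinal.mk G
      ≤ Cardinal.mk ({0, z, a, a + z} : Finset G) :=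
        Cardinal.mk_le_of_surjective (f := Subtype.val) fun b => ⟨⟨b, by simpa using hmem b⟩, rfl⟩
    _ = ({0, z, a, a + z} : Finset G).card := Cardinal.mk_coe_finset
    _ ≤ 4 := by exact_mod_cast Finset.card_le_four

theorem stmt_6_general (R : Type*) [LieRing R]
    (z : R) (hz : z ≠ 0) (hzZ : ∀ y : R, ⁅z, y⁆ = 0)
    (hzD : z ∈ AddSubgroup.closure {x : R | ∃ u v : R, ⁅u, v⁆ = x})
    (a : R) (haD : a ∉ AddSubgroup.closure {x : R | ∃ u v : R, ⁅u, v⁆ = x})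
    (α : R → R)
    (hαa : α a = a + z) (hαaz : α (a + z) = a)
    (hαx : ∀ x : R, x ≠ a → x ≠ a + z → α x = x) :
    Function.Bijective α ∧ (∀ x y : R, α ⁅x, y⁆ = ⁅α x, α y⁆) ∧
      (4 < Cardinal.mk R → ¬ (∀ x y : R, α (x + y) = α x + α y)) := by
  classical
  have hα : α = Equiv.swap a (a + z) := by
    funext x
    rw [Equiv.swap_apply_def]
    split_ifs with ha haz
    exacts [ha ▸ hαa, haz ▸ hαaz, hαx x ha haz]
  subst hα
  refine ⟨(Equiv.swap a (a + z)).bijective, fun x y => ?_, fun hcard hadd => ?_⟩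
  · have hmem : ⁅x, y⁆ ∈ AddSubgroup.closure {x : R | ∃ u v : R, ⁅u, v⁆ = x} :=
      AddSubgroup.subset_closure ⟨x, y, rfl⟩
    have hazD : a + z ∉ AddSubgroup.closure {x : R | ∃ u v : R, ⁅u, v⁆ = x} := by
      rwa [AddSubgroup.add_mem_cancel_right _ hzD]
    rw [Equiv.swap_apply_of_ne_of_ne (ne_of_mem_of_not_mem hmem haD)
        (ne_of_mem_of_not_mem hmem hazD),
      lie_apply_apply_eq_of_lie_sub_self_eq_zero (lie_swap_add_sub_self_eq_zero hzZ a)]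
  · exact (mk_le_four_of_swap_add_map_add hz hadd).not_gt hcard

theorem stmt_6 (R : Type*) [LieRing R]
    (hnc : ∃ x y : R, ⁅x, y⁆ ≠ 0)
    (z : R) (hz : z ≠ 0) (hzZ : ∀ y : R, ⁅z, y⁆ = 0)
    (hzD : z ∈ AddSubgroup.closure {x : R | ∃ u v : R, ⁅u, v⁆ = x})
    (a : R) (haD : a ∉ AddSubgroup.closure {x : R | ∃ u v : R, ⁅u, v⁆ = x})
    (α : R → R)
    (hαa : α a = a + z) (hαaz : α (a + z) = a)
    (hαx : ∀ x : R, x ≠ a → x ≠ a + z → α x = x) :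
    Function.Bijective α ∧ (∀ x y : R, α ⁅x, y⁆ = ⁅α x, α y⁆) ∧
      (4 < Cardinal.mk R → ¬ (∀ x y : R, α (x + y) = α x + α y)) :=
  stmt_6_general R z hz hzZ hzD a haD α hαa hαaz hαx
end

section
/- Let R be a Lie ring with Z(R) ∩ [R,R] = {0}, and suppose there exist distinct nonzero central elements z₁, z₂ ∈ Z(R) and a nonzero element a ∈ [R,R]. Then the map swapping a + z₁ and a + z₂ and fixing all other elements is a commutator-preserving bijection of R; if |R| > 4 it is not additive, so R is not a UA-Lie ring. -/
theorem stmt_7 (R : Type*) [LieRing R]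
    (hZD : ∀ x : R, (∀ y : R, ⁅x, y⁆ = 0) →
      x ∈ AddSubgroup.closure {w : R | ∃ u v : R, ⁅u, v⁆ = w} → x = 0)
    (z₁ z₂ : R) (hz₁ : z₁ ≠ 0) (hz₂ : z₂ ≠ 0) (hz : z₁ ≠ z₂)
    (hz₁Z : ∀ y : R, ⁅z₁, y⁆ = 0) (hz₂Z : ∀ y : R, ⁅z₂, y⁆ = 0)
    (a : R) (ha : a ≠ 0)
    (haD : a ∈ AddSubgroup.closure {w : R | ∃ u v : R, ⁅u, v⁆ = w})
    (α : R → R)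
    (hα₁ : α (a + z₁) = a + z₂) (hα₂ : α (a + z₂) = a + z₁)
    (hαx : ∀ x : R, x ≠ a + z₁ → x ≠ a + z₂ → α x = x) :
    Function.Bijective α ∧ (∀ x y : R, α ⁅x, y⁆ = ⁅α x, α y⁆) ∧
      (4 < Cardinal.mk R → ¬ (∀ x y : R, α (x + y) = α x + α y)) := by
  have hne : (a + z₁ : R) ≠ a + z₂ := by
    intro h; exact hz (by exact add_left_cancel h)
  -- α is an involution
  have hinv : Function.Involutive α := by
    intro x
    by_cases h1 : x = a + z₁
    · rw [h1, hα₁, hα₂]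
    · by_cases h2 : x = a + z₂
      · rw [h2, hα₂, hα₁]
      · rw [hαx x h1 h2, hαx x h1 h2]
  -- every element in the image of the bracket is fixed by α
  have hfix : ∀ x y : R, α ⁅x, y⁆ = ⁅x, y⁆ := by
    intro x y
    have hmem : ⁅x, y⁆ ∈ AddSubgroup.closure {w : R | ∃ u v : R, ⁅u, v⁆ = w} :=
      AddSubgroup.subset_closure ⟨x, y, rfl⟩
    apply hαx
    · intro h
      apply hz₁
      apply hZD z₁ hz₁Z
      have : z₁ = ⁅x, y⁆ - a := by rw [h]; abel
      rw [this]
      exact sub_mem hmem haD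
    · intro h
      apply hz₂
      apply hZD z₂ hz₂Z
      have : z₂ = ⁅x, y⁆ - a := by rw [h]; abel
      rw [this]
      exact sub_mem hmem haD
  -- α x differs from x by a central element
  have hcent : ∀ x : R, ∃ c : R, α x = x + c ∧ ∀ y : R, ⁅c, y⁆ = 0 := by
    intro x
    by_cases h1 : x = a + z₁
    · refine ⟨z₂ - z₁, ?_, ?_⟩
      · rw [h1, hα₁]; abel
      · intro y; rw [sub_lie, hz₁Z, hz₂Z, sub_zero]
    · by_cases h2 : x = a + z₂
      · refine ⟨z₁ - z₂, ?_, ?_⟩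
        · rw [h2, hα₂]; abel
        · intro y; rw [sub_lie, hz₁Z, hz₂Z, zero_sub, neg_zero]
      · exact ⟨0, by rw [hαx x h1 h2, add_zero], fun y => zero_lie y⟩
  refine ⟨hinv.bijective, ?_, ?_⟩
  · intro x y
    obtain ⟨c, hc, hcz⟩ := hcent x
    obtain ⟨c', hc', hcz'⟩ := hcent y
    have h1 : ⁅x, c'⁆ = 0 := by rw [← lie_skew, hcz', neg_zero]
    rw [hfix, hc, hc', add_lie, lie_add, lie_add, hcz, hcz, h1]
    abel
  · intro hcard hadd
    -- find c outside a 4-element set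
    have hex : ∃ c : R, c ∉ ({0, z₂ - z₁, a + z₁, a + z₂} : Set R) := by
      by_contra hc
      push_neg at hc
      have hsub : (Set.univ : Set R) ⊆ ({0, z₂ - z₁, a + z₁, a + z₂} : Set R) :=
        fun c _ => hc c
      have h1 : Cardinal.mk R ≤ Cardinal.mk ({0, z₂ - z₁, a + z₁, a + z₂} : Set R) := by
        rw [← Cardinal.mk_univ]
        exact Cardinal.mk_le_mk_of_subset hsub
      have h2 : Cardinal.mk ({0, z₂ - z₁, a + z₁, a + z₂} : Set R) ≤ 4 := by
        calc Cardinal.mk ({0, z₂ - z₁, a + z₁, a + z₂} : Set R)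
            ≤ Cardinal.mk ({z₂ - z₁, a + z₁, a + z₂} : Set R) + 1 := Cardinal.mk_insert_le
          _ ≤ (Cardinal.mk ({a + z₁, a + z₂} : Set R) + 1) + 1 := by
              gcongr; exact Cardinal.mk_insert_le
          _ ≤ ((Cardinal.mk ({a + z₂} : Set R) + 1) + 1) + 1 := by
              gcongr; exact Cardinal.mk_insert_le
          _ = ((1 + 1) + 1) + 1 := by rw [Cardinal.mk_singleton]
          _ = 4 := by norm_num
      exact absurd (h1.trans h2) (not_le.mpr hcard)
    obtain ⟨c, hc⟩ := hex
    simp only [Set.mem_insert_iff, Set.mem_singleton_iff, not_or] at hc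
    obtain ⟨hc0, hcd, hc1, hc2⟩ := hc
    have hsum1 : a + z₁ + c ≠ a + z₁ := by
      intro h; exact hc0 (add_left_cancel (h.trans (add_zero (a + z₁)).symm))
    have hsum2 : a + z₁ + c ≠ a + z₂ := by
      intro h
      apply hcd
      have : c = a + z₂ - (a + z₁) := by rw [← h]; abel
      rw [this]; abel
    have e1 : α (a + z₁ + c) = a + z₁ + c := hαx _ hsum1 hsum2
    have e2 : α (a + z₁ + c) = α (a + z₁) + α c := hadd _ _
    rw [e1, hα₁, hαx c hc1 hc2] at e2
    exact hz (by have := add_right_cancel e2; exact add_left_cancel this)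
end

section
/- Every nilpotent Lie ring R with |R| > 4 is not a UA-Lie ring. -/
/-!
Swap `a` and `a + z`, where `z ≠ 0` is central and neither `a` nor `a + z` is a bracket. As `z` is
central the swap preserves brackets, and as it fixes every bracket it is commutator-preserving.
With more than four elements some `x` avoids `a`, `a + z`, `0`, `-z`, and then `x + (a - x) = a`
shows that the swap is not additive. In a nilpotent Lie ring such `a` and `z` exist: if `R` is
abelian every bracket is `0`; otherwise the derived ideal `[R, R]` is proper and meets the centre
nontrivially, so take `z` in the intersection and `a` outside `[R, R]`.
-/

theorem Cardinal.exists_ne_of_four_lt {α : Type*} (h : 4 < Cardinal.mk α) (p q r s : α) :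
    ∃ x, x ≠ p ∧ x ≠ q ∧ x ≠ r ∧ x ≠ s := by
  obtain ⟨x, hx⟩ := Cardinal.exists_notMem_of_length_lt [p, q, r, s] (by simpa using h)
  simp only [List.mem_cons, List.not_mem_nil, or_false, not_or] at hx
  exact ⟨x, hx⟩

theorem exists_swap_add_ne {G : Type*} [AddCommGroup G] [DecidableEq G] {z : G} (hz : z ≠ 0)
    (hG : 4 < Cardinal.mk G) (a : G) :
    ∃ x y, Equiv.swap a (a + z) (x + y) ≠ Equiv.swap a (a + z) x + Equiv.swap a (a + z) y := by
  obtain ⟨x, hxa, hxaz, hx0, hxz⟩ := Cardinal.exists_ne_of_four_lt hG a (a + z) 0 (-z)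
  have hya : a - x ≠ a := by simpa [sub_eq_self] using hx0
  have hyaz : a - x ≠ a + z := by
    intro h; apply hxz; linear_combination (norm := abel_nf) -h
  refine ⟨x, a - x, ?_⟩
  rw [add_sub_cancel, Equiv.swap_apply_left, Equiv.swap_apply_of_ne_of_ne hxa hxaz,
    Equiv.swap_apply_of_ne_of_ne hya hyaz, add_sub_cancel]
  simpa using hz

section LieRing

variable {R : Type*} [LieRing R]

theorem lie_add_mem_center {c d : R} (hc : c ∈ LieAlgebra.center ℤ R)
    (hd : d ∈ LieAlgebra.center ℤ R) (x y : R) : ⁅x + c, y + d⁆ = ⁅x, y⁆ := by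
  rw [LieModule.mem_maxTrivSubmodule] at hc hd
  rw [add_lie, lie_add, lie_add, hd, hd, ← lie_skew c y, hc]
  simp only [neg_zero, add_zero]

theorem swap_add_sub_mem_center [DecidableEq R] {z : R} (hz : z ∈ LieAlgebra.center ℤ R)
    (a x : R) :
    Equiv.swap a (a + z) x - x ∈ LieAlgebra.center ℤ R := by
  rw [Equiv.swap_apply_def]
  split_ifs with h₁ h₂
  · subst h₁; simpa using hz
  · subst h₂; simpa using neg_mem hz
  · simp

theorem lie_swap_add_of_mem_center [DecidableEq R] {z : R} (hz : z ∈ LieAlgebra.center ℤ R)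
    (a x y : R) : ⁅Equiv.swap a (a + z) x, Equiv.swap a (a + z) y⁆ = ⁅x, y⁆ := by
  simpa using
    lie_add_mem_center (swap_add_sub_mem_center hz a x) (swap_add_sub_mem_center hz a y) x y

theorem exists_ne_zero_mem_center_forall_lie_ne [LieModule.IsNilpotent R R]
    (hR : 2 < Cardinal.mk R) :
    ∃ z a : R, z ≠ 0 ∧ z ∈ LieAlgebra.center ℤ R ∧
      (∀ x y : R, ⁅x, y⁆ ≠ a) ∧ (∀ x y : R, ⁅x, y⁆ ≠ a + z) := by
  have : Nontrivial R := Cardinal.one_lt_iff_nontrivial.mp (lt_trans (by norm_num) hR)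
  by_cases htriv : LieModule.IsTrivial R R
  · obtain ⟨z, hz⟩ := exists_ne (0 : R)
    obtain ⟨a, ha⟩ := Cardinal.exists_notMem_of_length_lt [0, -z] (by simpa using hR)
    simp only [List.mem_cons, List.not_mem_nil, or_false, not_or] at ha
    have hzc : z ∈ LieAlgebra.center ℤ R :=
      (LieModule.mem_maxTrivSubmodule ℤ R R z).mpr (LieModule.IsTrivial.trivial · z)
    refine ⟨z, a, hz, hzc, fun x y h => ha.1 ?_, fun x y h => ha.2 ?_⟩
    · rw [← h, LieModule.IsTrivial.trivial]
    · rw [eq_neg_iff_add_eq_zero, ← h, LieModule.IsTrivial.trivial]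
  · obtain ⟨z, hz, hz0⟩ :
        ∃ z ∈ LieModule.lowerCentralSeries ℤ R R 1 ⊓ LieAlgebra.center ℤ R, z ≠ 0 := by
      have := mt (LieModule.disjoint_lowerCentralSeries_maxTrivSubmodule_iff ℤ R R).mp htriv
      rw [disjoint_iff, LieSubmodule.eq_bot_iff] at this
      push Not at this
      exact this
    -- `derivedSeries ℤ R 1` and `lowerCentralSeries ℤ R R 1` are both `⁅⊤, ⊤⁆` by definition.
    obtain ⟨a, -, ha⟩ := SetLike.exists_of_lt (LieAlgebra.derivedSeries_lt_top_of_solvable ℤ R)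
    have hlie (x y : R) : ⁅x, y⁆ ∈ LieModule.lowerCentralSeries ℤ R R 1 :=
      LieSubmodule.lie_mem_lie (LieSubmodule.mem_top x) (LieSubmodule.mem_top y)
    refine ⟨z, a, hz0, hz.2, fun x y h => ha (h ▸ hlie x y), fun x y h => ha ?_⟩
    have hmem : a + z - z ∈ LieModule.lowerCentralSeries ℤ R R 1 := sub_mem (h ▸ hlie x y) hz.1
    rwa [add_sub_cancel_right] at hmem

end LieRing

theorem stmt_8 (R : Type u) [LieRing R] [LieModule.IsNilpotent R R]
    (hcard : 4 < Cardinal.mk R) :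
    ∃ (S : Type u) (_ : LieRing S) (α : R → S),
      Function.Bijective α ∧ (∀ x y : R, α ⁅x, y⁆ = ⁅α x, α y⁆) ∧
      ¬ (∀ x y : R, α (x + y) = α x + α y) := by
  classical
  obtain ⟨z, a, hz0, hz, ha, haz⟩ :=
    exists_ne_zero_mem_center_forall_lie_ne (lt_trans (by norm_num) hcard : 2 < Cardinal.mk R)
  obtain ⟨x, y, hxy⟩ := exists_swap_add_ne hz0 hcard a
  refine ⟨R, inferInstance, Equiv.swap a (a + z), (Equiv.swap a (a + z)).bijective,
    fun x y => ?_, fun h => hxy (h x y)⟩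
  rw [lie_swap_add_of_mem_center hz, Equiv.swap_apply_of_ne_of_ne (ha x y) (haz x y)]
end

section
/- Let K be a field with at least 3 elements and n ≥ 2. Then the Lie algebra gl_n(K) (all n×n matrices with the commutator bracket) is not a UA-Lie ring: there exists a commutator-preserving bijection from gl_n(K) to itself that is not additive. -/
/-!
If `z ≠ 0` is central and neither `x` nor `x + z` is a commutator, the transposition `α` of `x`
and `x + z` moves every element by a central amount, so `⁅α A, α B⁆ = ⁅A, B⁆`, and it fixes every
commutator, so `α ⁅A, B⁆ = ⁅A, B⁆` as well. It is not additive, since it fixes `w` and `x - w` for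
a suitable `w` but not their sum `x`. In `gl_n(K)` commutators have trace zero, and `x = E₀₀`,
`z = c • 1`, `w = E₀₁` work once `c ≠ 0` and `1 + n c ≠ 0`; such a `c` exists because `K` has at
least three elements.
-/

open Cardinal Equiv

theorem exists_ne_and_ne_of_three_le_mk {α : Type*} (h : 3 ≤ #α) (a b : α) :
    ∃ c, c ≠ a ∧ c ≠ b := by
  by_contra! hab
  have hsub : (Set.univ : Set α) ⊆ {a, b} := fun c _ => by
    by_cases hc : c = a
    · exact Or.inl hc
    · exact Or.inr (hab c hc)
  have hle := (mk_le_mk_of_subset hsub).trans mk_insert_le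
  rw [mk_univ, mk_singleton] at hle
  have := h.trans hle
  norm_num at this

theorem exists_ne_zero_and_one_add_mul_ne_zero {K : Type*} [Field K] (hK : 3 ≤ #K) (a : K) :
    ∃ c : K, c ≠ 0 ∧ 1 + a * c ≠ 0 := by
  obtain ⟨c, hc0, hca⟩ := exists_ne_and_ne_of_three_le_mk hK 0 (-a⁻¹)
  refine ⟨c, hc0, fun h => hca ?_⟩
  have ha : a ≠ 0 := by rintro rfl; simp at h
  field_simp
  linear_combination h

theorem Equiv.swap_not_map_add {G : Type*} [AddGroup G] [DecidableEq G] {x y w : G}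
    (hxy : x ≠ y) (hw0 : w ≠ 0) (hwx : w ≠ x) (hwy : w ≠ y) (hxw : x - w ≠ y) :
    ¬ ∀ a b, swap x y (a + b) = swap x y a + swap x y b := by
  intro hadd
  have h := hadd (x - w) w
  rw [sub_add_cancel, swap_apply_left, swap_apply_of_ne_of_ne hwx hwy,
    swap_apply_of_ne_of_ne (mt sub_eq_self.mp hw0) hxw, sub_add_cancel] at h
  exact hxy h.symm

section LieRing

variable {L : Type*} [LieRing L]

theorem lie_add_add_of_central {z w : L} (hz : ∀ A : L, ⁅z, A⁆ = 0) (hw : ∀ A : L, ⁅w, A⁆ = 0)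
    (A B : L) : ⁅A + z, B + w⁆ = ⁅A, B⁆ := by
  rw [add_lie, lie_add, lie_add, hz, hz, ← lie_skew A w, hw, neg_zero, add_zero, add_zero,
    add_zero]

variable [DecidableEq L] {x z : L}

theorem swap_sub_self_lie_eq_zero (hz : ∀ A : L, ⁅z, A⁆ = 0) (A : L) :
    ∀ B : L, ⁅swap x (x + z) A - A, B⁆ = 0 := by
  intro B
  by_cases hA : A = x
  · rw [hA, swap_apply_left, add_sub_cancel_left, hz]
  by_cases hA' : A = x + z
  · rw [hA', swap_apply_right, sub_add_cancel_left, neg_lie, hz, neg_zero]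
  · rw [swap_apply_of_ne_of_ne hA hA', sub_self, zero_lie]

theorem lie_swap_add_swap_add (hz : ∀ A : L, ⁅z, A⁆ = 0) (A B : L) :
    ⁅swap x (x + z) A, swap x (x + z) B⁆ = ⁅A, B⁆ := by
  simpa using lie_add_add_of_central (swap_sub_self_lie_eq_zero hz A) (swap_sub_self_lie_eq_zero hz B) A B

theorem exists_bijective_map_lie_not_map_add {w : L} (hz : ∀ A : L, ⁅z, A⁆ = 0)
    (hx : ∀ A B : L, ⁅A, B⁆ ≠ x) (hxz : ∀ A B : L, ⁅A, B⁆ ≠ x + z) (hz0 : z ≠ 0)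
    (hw0 : w ≠ 0) (hwx : w ≠ x) (hwxz : w ≠ x + z) (hxw : x - w ≠ x + z) :
    ∃ α : L → L, Function.Bijective α ∧ (∀ A B, α ⁅A, B⁆ = ⁅α A, α B⁆) ∧
      ¬ ∀ A B, α (A + B) = α A + α B := by
  refine ⟨swap x (x + z), (swap x (x + z)).bijective, fun A B => ?_,
    swap_not_map_add (add_ne_left.mpr hz0).symm hw0 hwx hwxz hxw⟩
  rw [lie_swap_add_swap_add hz, swap_apply_of_ne_of_ne (hx A B) (hxz A B)]

end LieRing

namespace Matrix

variable {ι R : Type*} [Fintype ι] [CommRing R]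

theorem trace_lie_eq_zero (A B : Matrix ι ι R) : trace ⁅A, B⁆ = 0 := by
  rw [Ring.lie_def, trace_sub, trace_mul_comm, sub_self]

theorem lie_ne_of_trace_ne_zero {X : Matrix ι ι R} (hX : trace X ≠ 0) (A B : Matrix ι ι R) :
    ⁅A, B⁆ ≠ X :=
  fun h => hX (h ▸ trace_lie_eq_zero A B)

theorem smul_one_lie [DecidableEq ι] (c : R) (A : Matrix ι ι R) :
    ⁅c • (1 : Matrix ι ι R), A⁆ = 0 := by
  rw [Ring.lie_def, smul_mul_assoc, mul_smul_comm, one_mul, mul_one, sub_self]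

end Matrix

theorem stmt_9 (K : Type*) [Field K] (hK : 3 ≤ Cardinal.mk K)
    (n : ℕ) (hn : 2 ≤ n) :
    ∃ α : Matrix (Fin n) (Fin n) K → Matrix (Fin n) (Fin n) K,
      Function.Bijective α ∧ (∀ A B, α ⁅A, B⁆ = ⁅α A, α B⁆) ∧
      ¬ (∀ A B, α (A + B) = α A + α B) := by
  classical
  -- Mathlib does not make every ring a Lie ring globally; this structure has the commutator bracket.
  let _ : LieRing (Matrix (Fin n) (Fin n) K) := LieRing.ofAssociativeRing
  obtain ⟨c, hc0, hnc⟩ := exists_ne_zero_and_one_add_mul_ne_zero hK (n : K)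
  let i : Fin n := ⟨0, by omega⟩
  let j : Fin n := ⟨1, by omega⟩
  have hij : i ≠ j := by simp [i, j, Fin.ext_iff]
  have htr_x : Matrix.trace (Matrix.single i i (1 : K)) = 1 := Matrix.trace_single_eq_same i 1
  have htr_xz : Matrix.trace (Matrix.single i i (1 : K) + c • 1) = 1 + n * c := by
    simp [Matrix.trace_add, htr_x, mul_comm]
  apply exists_bijective_map_lie_not_map_add (Matrix.smul_one_lie c)
    (Matrix.lie_ne_of_trace_ne_zero (htr_x ▸ one_ne_zero))
    (Matrix.lie_ne_of_trace_ne_zero (htr_xz ▸ hnc)) (w := Matrix.single i j 1)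
  -- `z ≠ 0` is read off at entry `(i, i)`, the conditions on `w` at entry `(i, j)`.
  all_goals intro h
  · exact hc0 (by simpa using congrFun (congrFun h i) i)
  all_goals simpa [hij] using congrFun (congrFun h i) j
end

section
/- Let α : R → S be a multiplication-preserving bijection of associative unital rings (α(ab) = α(a)α(b)), and suppose R = B ⊕ C is a direct sum of two left ideals. Then α(b + c) = α(b) + α(c) for all b ∈ B and c ∈ C. -/
theorem stmt_10 (R S : Type*) [Ring R] [Ring S] (α : R → S)
    (hbij : Function.Bijective α) (hmul : ∀ x y : R, α (x * y) = α x * α y)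
    (B C : Submodule R R) (hsup : B ⊔ C = ⊤) (hinf : B ⊓ C = ⊥) :
    ∀ b ∈ B, ∀ c ∈ C, α (b + c) = α b + α c := by
  intro b hb c hc
  -- split 1 = e + f
  have h1 : (1 : R) ∈ B ⊔ C := hsup ▸ Submodule.mem_top
  rw [Submodule.mem_sup] at h1
  obtain ⟨e, he, f, hf, hef⟩ := h1
  -- x ∈ B ⊓ C → x = 0
  have hzero : ∀ x, x ∈ B → x ∈ C → x = 0 := by
    intro x hxB hxC
    have : x ∈ B ⊓ C := ⟨hxB, hxC⟩
    simpa [hinf] using this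
  -- right multiplication by f kills B, by e kills C
  have hBf : ∀ x, x ∈ B → x * f = 0 := by
    intro x hx
    refine hzero _ ?_ ?_
    · have : x * f = x - x * e := by
        have : x * (e + f) = x := by rw [hef, mul_one]
        rw [mul_add] at this
        exact eq_sub_of_add_eq' this
      rw [this]
      exact Submodule.sub_mem B hx (by simpa [smul_eq_mul] using B.smul_mem x he)
    · simpa [smul_eq_mul] using C.smul_mem x hf
  have hCe : ∀ x, x ∈ C → x * e = 0 := by
    intro x hx
    refine hzero _ ?_ ?_
    · simpa [smul_eq_mul] using B.smul_mem x he
    · have : x * e = x - x * f := by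
        have : x * (e + f) = x := by rw [hef, mul_one]
        rw [mul_add] at this
        exact eq_sub_of_add_eq this
      rw [this]
      exact Submodule.sub_mem C hx (by simpa [smul_eq_mul] using C.smul_mem x hf)
  have hBe : ∀ x, x ∈ B → x * e = x := by
    intro x hx
    have h := hBf x hx
    have hx1 : x * (e + f) = x := by rw [hef, mul_one]
    rw [mul_add, h, add_zero] at hx1
    exact hx1
  have hCf : ∀ x, x ∈ C → x * f = x := by
    intro x hx
    have h := hCe x hx
    have hx1 : x * (e + f) = x := by rw [hef, mul_one]
    rw [mul_add, h, zero_add] at hx1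
    exact hx1
  -- α 0 = 0
  have hα0 : α 0 = 0 := by
    obtain ⟨x, hx⟩ := hbij.surjective 0
    calc α 0 = α (0 * x) := by rw [zero_mul]
    _ = α 0 * α x := hmul 0 x
    _ = α 0 * 0 := by rw [hx]
    _ = 0 := mul_zero _
  -- t with α t = α e + α f
  obtain ⟨t, ht⟩ := hbij.surjective (α e + α f)
  have het : e * t = e := by
    apply hbij.injective
    rw [hmul, ht, mul_add, ← hmul, ← hmul, hBe e he, hBf e he, hα0, add_zero]
  have hft : f * t = f := by
    apply hbij.injective
    rw [hmul, ht, mul_add, ← hmul, ← hmul, hCe f hf, hCf f hf, hα0, zero_add]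
  have ht1 : t = 1 := by
    calc t = 1 * t := (one_mul t).symm
    _ = (e + f) * t := by rw [hef]
    _ = e * t + f * t := add_mul e f t
    _ = e + f := by rw [het, hft]
    _ = 1 := hef
  calc α (b + c) = α ((b + c) * t) := by rw [ht1, mul_one]
  _ = α (b + c) * (α e + α f) := by rw [hmul, ht]
  _ = α ((b + c) * e) + α ((b + c) * f) := by rw [mul_add, ← hmul, ← hmul]
  _ = α b + α c := by
      rw [add_mul, add_mul, hBe b hb, hCe c hc, hBf b hb, hCf c hc, add_zero, zero_add]
end

section
/- Let α : R → S be a multiplication-preserving bijection of associative unital rings, R = B ⊕ C a direct sum of left ideals, and s : B → C an R-module homomorphism. Then α(s(b) + c) = α(s(b)) + α(c) for all b ∈ B, c ∈ C. -/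
/-- Step 1 of the Rickart–Stephenson argument: a multiplication-preserving
bijection is additive across a direct sum decomposition into left ideals. -/
lemma step1_rickart (R S : Type*) [Ring R] [Ring S] (α : R → S)
    (hbij : Function.Bijective α) (hmul : ∀ x y : R, α (x * y) = α x * α y)
    (B C : Submodule R R) (hsup : B ⊔ C = ⊤) (hinf : B ⊓ C = ⊥)
    {b c : R} (hb : b ∈ B) (hc : c ∈ C) : α (b + c) = α b + α c := by
  -- α 0 = 0
  obtain ⟨y0, hy0⟩ := hbij.2 0
  have hα0 : α 0 = 0 := by
    have := hmul 0 y0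
    rw [zero_mul, hy0, mul_zero] at this
    exact this
  -- idempotent-like splitting of 1
  have h1 : (1 : R) ∈ B ⊔ C := by rw [hsup]; trivial
  obtain ⟨e, he, f, hf, hef⟩ := Submodule.mem_sup.mp h1
  -- key multiplication facts
  have key : ∀ x : R, x ∈ B → x * e = x ∧ x * f = 0 := by
    intro x hx
    have hxe : x * e ∈ B := by simpa [smul_eq_mul] using B.smul_mem x he
    have hxf : x * f ∈ C := by simpa [smul_eq_mul] using C.smul_mem x hf
    have hsplit : x = x * e + x * f := by
      have : x * (e + f) = x * e + x * f := mul_add x e f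
      rwa [hef, mul_one] at this
    have hxfB : x * f ∈ B := by
      have : x * f = x - x * e := eq_sub_of_add_eq' hsplit.symm
      rw [this]; exact B.sub_mem hx hxe
    have hxf0 : x * f = 0 := by
      have : x * f ∈ B ⊓ C := ⟨hxfB, hxf⟩
      rw [hinf] at this; simpa using this
    constructor
    · rw [hxf0, add_zero] at hsplit; exact hsplit.symm
    · exact hxf0
  have key' : ∀ x : R, x ∈ C → x * f = x ∧ x * e = 0 := by
    intro x hx
    have hxe : x * e ∈ B := by simpa [smul_eq_mul] using B.smul_mem x he
    have hxf : x * f ∈ C := by simpa [smul_eq_mul] using C.smul_mem x hf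
    have hsplit : x = x * e + x * f := by
      have : x * (e + f) = x * e + x * f := mul_add x e f
      rwa [hef, mul_one] at this
    have hxeC : x * e ∈ C := by
      have : x * e = x - x * f := eq_sub_of_add_eq hsplit.symm
      rw [this]; exact C.sub_mem hx hxf
    have hxe0 : x * e = 0 := by
      have : x * e ∈ B ⊓ C := ⟨hxe, hxeC⟩
      rw [hinf] at this; simpa using this
    constructor
    · rw [hxe0, zero_add] at hsplit; exact hsplit.symm
    · exact hxe0
  obtain ⟨hbe, hbf⟩ := key b hb
  obtain ⟨hcf, hce⟩ := key' c hc
  -- pick z with α z = α b + α c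
  obtain ⟨z, hz⟩ := hbij.2 (α b + α c)
  have hze : z * e = b := by
    apply hbij.1
    rw [hmul, hz, add_mul, ← hmul, ← hmul, hbe, hce, hα0, add_zero]
  have hzf : z * f = c := by
    apply hbij.1
    rw [hmul, hz, add_mul, ← hmul, ← hmul, hbf, hcf, hα0, zero_add]
  have hzbc : z = b + c := by
    have : z * (e + f) = z * e + z * f := mul_add z e f
    rw [hef, mul_one, hze, hzf] at this
    exact this
  rw [← hzbc, hz]

theorem stmt_11 (R S : Type*) [Ring R] [Ring S] (α : R → S)
    (hbij : Function.Bijective α) (hmul : ∀ x y : R, α (x * y) = α x * α y)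
    (B C : Submodule R R) (hsup : B ⊔ C = ⊤) (hinf : B ⊓ C = ⊥)
    (s : B →ₗ[R] C) :
    ∀ (b : B) (c : C), α ((s b : R) + (c : R)) = α (s b : R) + α (c : R) := by
  intro b c
  -- the graph-like left ideal B' = (id + s)(B)
  set φ : B →ₗ[R] R := B.subtype + C.subtype ∘ₗ s with hφ
  have hφval : ∀ x : B, φ x = (x : R) + (s x : R) := fun x => rfl
  set B' : Submodule R R := LinearMap.range φ with hB'
  have hsup' : B' ⊔ C = ⊤ := by
    rw [eq_top_iff]
    intro r _
    have hr : r ∈ B ⊔ C := by rw [hsup]; trivial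
    obtain ⟨x, hx, y, hy, hxy⟩ := Submodule.mem_sup.mp hr
    apply Submodule.mem_sup.mpr
    refine ⟨φ ⟨x, hx⟩, ⟨⟨x, hx⟩, rfl⟩, y - (s ⟨x, hx⟩ : R),
      C.sub_mem hy (s ⟨x, hx⟩).2, ?_⟩
    rw [hφval]
    rw [← hxy]
    abel
  have hinf' : B' ⊓ C = ⊥ := by
    rw [eq_bot_iff]
    rintro z ⟨⟨x, hx⟩, hzC⟩
    rw [hφval] at hx
    have hxC : (x : R) ∈ C := by
      have : (x : R) = z - (s x : R) := by rw [← hx]; abel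
      rw [this]; exact C.sub_mem hzC (s x).2
    have hx0 : (x : R) ∈ B ⊓ C := ⟨x.2, hxC⟩
    rw [hinf] at hx0
    have hx0' : (x : R) = 0 := by simpa using hx0
    have : x = 0 := Subtype.ext hx0'
    rw [this] at hx
    simp at hx
    simp [← hx]
  -- three applications of step 1
  have h1 : α ((b : R) + ((s b : R) + (c : R)))
      = α (b : R) + α ((s b : R) + (c : R)) :=
    step1_rickart R S α hbij hmul B C hsup hinf b.2 (C.add_mem (s b).2 c.2)
  have h2 : α (((b : R) + (s b : R)) + (c : R))
      = α ((b : R) + (s b : R)) + α (c : R) :=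
    step1_rickart R S α hbij hmul B' C hsup' hinf' ⟨b, rfl⟩ c.2
  have h3 : α ((b : R) + (s b : R)) = α (b : R) + α (s b : R) :=
    step1_rickart R S α hbij hmul B C hsup hinf b.2 (s b).2
  have hassoc : (b : R) + ((s b : R) + (c : R)) = ((b : R) + (s b : R)) + (c : R) := (add_assoc _ _ _).symm
  rw [hassoc, h2, h3] at h1
  have := h1.symm
  rw [add_assoc] at this
  exact add_left_cancel this
end

section
/- Let A be an associative ring with unit and n ≥ 2. Then the matrix ring Mat_n(A) is a UA-ring: every multiplication-preserving bijection from Mat_n(A) to any associative ring S is additive. -/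
/-!
Transporting the addition of `S` back along `α` gives a second addition `⊕` on `R = Mat_n(A)`
over which the multiplication distributes on both sides and for which `0` is neutral; it
suffices to show `⊕ = +`. Use the Peirce decomposition for `e = E₀₀` and `f = 1 - e`.
For `a, b ∈ eRf`, right multiplication by `e` and `f` sends `e ⊕ a` to `e` and `a`, so
`e ⊕ a = e + a`; likewise `b ⊕ f = b + f`, and as `ba = ef = 0`,
`a ⊕ b = (e ⊕ b)(a ⊕ f) = (e + b)(a + f) = a + b`. The same holds on `fRe`. On `eRe`
(resp. `fRf`) the defect `(a ⊕ b) - (a + b)` is killed by right (resp. left) multiplication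
into `eRf`, which forces it to vanish because `f` (resp. `e`) generates `Mat_n(A)` as a
two-sided ideal.
-/

structure IsDistribOp {R : Type*} [Mul R] [Zero R] (op : R → R → R) : Prop where
  mul_op : ∀ z x y, z * op x y = op (z * x) (z * y)
  op_mul : ∀ z x y, op x y * z = op (x * z) (y * z)
  op_zero : ∀ x, op x 0 = x
  zero_op : ∀ x, op 0 x = x

theorem MulEquiv.isDistribOp_symm_add {R S : Type*} [MulZeroClass R]
    [NonUnitalNonAssocSemiring S] (φ : R ≃* S) :
    IsDistribOp fun x y => φ.symm (φ x + φ y) where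
  mul_op z x y := φ.injective <| by simp [mul_add]
  op_mul z x y := φ.injective <| by simp [add_mul]
  op_zero x := by simp
  zero_op x := by simp

structure IsPeircePair {R : Type*} [Ring R] (e f : R) : Prop where
  isIdempotentElem_left : IsIdempotentElem e
  isIdempotentElem_right : IsIdempotentElem f
  left_mul_right : e * f = 0
  right_mul_left : f * e = 0
  add_eq_one : e + f = 1

namespace IsPeircePair

variable {R : Type*} [Ring R] {e f : R}

theorem symm (P : IsPeircePair e f) : IsPeircePair f e :=
  ⟨P.isIdempotentElem_right, P.isIdempotentElem_left, P.right_mul_left, P.left_mul_right,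
    by rw [add_comm, P.add_eq_one]⟩

theorem one_sub (he : IsIdempotentElem e) : IsPeircePair e (1 - e) :=
  ⟨he, he.one_sub, he.mul_one_sub_self, he.one_sub_mul_self, add_sub_cancel _ _⟩

theorem sum_corners (P : IsPeircePair e f) (x : R) :
    e * x * e + e * x * f + f * x * e + f * x * f = x := by
  calc _ = (e + f) * x * (e + f) := by noncomm_ring
    _ = x := by rw [P.add_eq_one, one_mul, mul_one]

end IsPeircePair

namespace IsDistribOp

variable {R : Type*} [Ring R] {op : R → R → R} {e f : R}

theorem mul_op_mul (h : IsDistribOp op) (p q x y : R) :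
    p * op x y * q = op (p * x * q) (p * y * q) := by
  rw [h.mul_op, h.op_mul]

theorem op_eq_sum_corners (h : IsDistribOp op) (P : IsPeircePair e f) (x y : R) :
    op x y = op (e * x * e) (e * y * e) + op (e * x * f) (e * y * f)
      + op (f * x * e) (f * y * e) + op (f * x * f) (f * y * f) := by
  simp only [← h.mul_op_mul, P.sum_corners]

theorem op_left_offDiag (h : IsDistribOp op) (P : IsPeircePair e f) (x : R) :
    op e (e * x * f) = e + e * x * f := by
  have h_e : op e (e * x * f) * e = e := by
    rw [h.op_mul, P.isIdempotentElem_left.eq, mul_assoc _ f, P.right_mul_left, mul_zero,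
      h.op_zero]
  have h_f : op e (e * x * f) * f = e * x * f := by
    rw [h.op_mul, P.left_mul_right, P.isIdempotentElem_right.mul_mul_self, h.zero_op]
  calc _ = op e (e * x * f) * (e + f) := by rw [P.add_eq_one, mul_one]
    _ = _ := by rw [mul_add, h_e, h_f]

theorem op_offDiag_right (h : IsDistribOp op) (P : IsPeircePair e f) (x : R) :
    op (e * x * f) f = e * x * f + f := by
  have e_h : e * op (e * x * f) f = e * x * f := by
    rw [h.mul_op, ← mul_assoc, ← mul_assoc, P.isIdempotentElem_left.eq, P.left_mul_right,
      h.op_zero]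
  have f_h : f * op (e * x * f) f = f := by
    rw [h.mul_op, ← mul_assoc, ← mul_assoc, P.right_mul_left, zero_mul, zero_mul,
      P.isIdempotentElem_right.eq, h.zero_op]
  calc _ = (e + f) * op (e * x * f) f := by rw [P.add_eq_one, one_mul]
    _ = _ := by rw [add_mul, e_h, f_h]

theorem op_offDiag (h : IsDistribOp op) (P : IsPeircePair e f) (x y : R) :
    op (e * x * f) (e * y * f) = e * x * f + e * y * f := by
  set a := e * x * f
  set b := e * y * f
  have ea : e * a = a := by simp only [a, ← mul_assoc, P.isIdempotentElem_left.eq]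
  have bf : b * f = b := P.isIdempotentElem_right.mul_mul_self _
  have ba : b * a = 0 :=
    calc b * a = e * y * (f * e) * x * f := by simp only [a, b, mul_assoc]
      _ = 0 := by rw [P.right_mul_left, mul_zero, zero_mul, zero_mul]
  have factor : op a b = op e b * op a f := by
    rw [h.mul_op, h.op_mul, h.op_mul, ea, ba, P.left_mul_right, bf, h.op_zero, h.zero_op]
  rw [factor, h.op_left_offDiag P, h.op_offDiag_right P, add_mul, mul_add, mul_add, ea,
    P.left_mul_right, ba, bf, add_zero, zero_add, add_comm]

theorem op_diag_left (h : IsDistribOp op) (P : IsPeircePair e f)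
    (hf : ∀ d, (∀ z, d * z * f = 0) → d = 0) (x y : R) :
    op (e * x * e) (e * y * e) = e * x * e + e * y * e := by
  rw [← sub_eq_zero]
  refine hf _ fun z => ?_
  have reassoc : ∀ w, e * w * e * z * f = e * (w * e * z) * f := by simp [mul_assoc]
  rw [sub_mul, sub_mul, h.op_mul, h.op_mul, reassoc, reassoc, h.op_offDiag P,
    add_mul, add_mul, reassoc, reassoc, sub_self]

theorem op_diag_right (h : IsDistribOp op) (P : IsPeircePair e f)
    (he : ∀ d, (∀ z, e * z * d = 0) → d = 0) (x y : R) :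
    op (f * x * f) (f * y * f) = f * x * f + f * y * f := by
  rw [← sub_eq_zero]
  refine he _ fun z => ?_
  have reassoc : ∀ w, e * z * (f * w * f) = e * (z * f * w) * f := by simp [mul_assoc]
  rw [mul_sub, h.mul_op, reassoc, reassoc, h.op_offDiag P, mul_add, reassoc, reassoc,
    sub_self]

theorem eq_add (h : IsDistribOp op) (P : IsPeircePair e f)
    (he : ∀ d, (∀ z, e * z * d = 0) → d = 0) (hf : ∀ d, (∀ z, d * z * f = 0) → d = 0)
    (x y : R) : op x y = x + y := by
  rw [h.op_eq_sum_corners P, h.op_diag_left P hf, h.op_offDiag P,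
    h.op_offDiag P.symm, h.op_diag_right P he]
  conv_rhs => rw [← P.sum_corners x, ← P.sum_corners y]
  abel

end IsDistribOp

namespace Matrix

variable {n α : Type*} [Fintype n] [DecidableEq n]

theorem eq_zero_of_forall_single_mul_mul_eq_zero [NonAssocSemiring α] (i : n) {d : Matrix n n α}
    (h : ∀ x, single i i 1 * x * d = 0) : d = 0 := by
  ext k j
  simpa using congrFun₂ (h (single i k 1)) i j

theorem eq_zero_of_forall_mul_mul_one_sub_single_eq_zero [Ring α] {i j : n} (hij : i ≠ j)
    {d : Matrix n n α} (h : ∀ x, d * x * (1 - single i i 1) = 0) : d = 0 := by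
  ext k l
  simpa [mul_sub, mul_assoc, hij.symm] using congrFun₂ (h (single l j 1)) k j

end Matrix

theorem stmt_12 (A : Type*) [Ring A] (n : ℕ) (hn : 2 ≤ n)
    (S : Type*) [NonUnitalRing S] (α : Matrix (Fin n) (Fin n) A → S)
    (hbij : Function.Bijective α) (hmul : ∀ x y, α (x * y) = α x * α y) :
    ∀ x y, α (x + y) = α x + α y := by
  let φ := MulEquiv.mk' (Equiv.ofBijective α hbij) hmul
  let i₀ : Fin n := ⟨0, by omega⟩
  let i₁ : Fin n := ⟨1, by omega⟩
  have hi : i₀ ≠ i₁ := by simp [i₀, i₁, Fin.ext_iff]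
  have P : IsPeircePair (Matrix.single i₀ i₀ (1 : A)) (1 - Matrix.single i₀ i₀ 1) :=
    .one_sub (by simp [IsIdempotentElem])
  have hop := φ.isDistribOp_symm_add.eq_add P
    (fun _ => Matrix.eq_zero_of_forall_single_mul_mul_eq_zero i₀)
    (fun _ => Matrix.eq_zero_of_forall_mul_mul_one_sub_single_eq_zero hi)
  intro x y
  exact (congrArg φ (hop x y)).symm.trans (φ.apply_symm_apply _)
end

section
/- Let q = p^n > 4 be a prime power. Then there exists a bijection of the finite field F_q preserving multiplication (α(xy) = α(x)α(y) for all x, y) that is not additive. Hence F_q is not a UA-ring for q > 4. -/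
theorem stmt_13 (p n : ℕ) (hp : p.Prime) (F : Type*) [Field F] [Fintype F]
    (hcard : Fintype.card F = p ^ n) (hq : 4 < p ^ n) :
    ∃ α : F → F, Function.Bijective α ∧ (∀ x y : F, α (x * y) = α x * α y) ∧
      ¬ (∀ x y : F, α (x + y) = α x + α y) := by
  classical
  refine ⟨fun x => x⁻¹, ⟨?_, ?_⟩, ?_, ?_⟩
  · intro a b hab; simpa using congrArg (·⁻¹) hab
  · intro a; exact ⟨a⁻¹, inv_inv a⟩
  · intro x y; exact mul_inv x y
  · intro h
    -- every x ≠ 0 with x + 1 ≠ 0 satisfies x^2 + x + 1 = 0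
    have key : ∀ x : F, x ≠ 0 → x + 1 ≠ 0 → x ^ 2 + x + 1 = 0 := by
      intro x hx hx1
      have h1 := h x 1
      field_simp at h1
      linear_combination -h1
    -- the quadratic has at most 2 roots
    set P : Polynomial F := Polynomial.X ^ 2 + Polynomial.X + 1 with hP
    have hP0 : P ≠ 0 := by
      intro hc
      have := congrArg (Polynomial.eval 0) hc
      simp [hP] at this
    have hdeg : P.natDegree ≤ 2 := by
      rw [hP]; compute_degree
    have hsub : (Finset.univ \ {(0 : F), -1}) ⊆ P.roots.toFinset := by
      intro x hx
      simp only [Finset.mem_sdiff, Finset.mem_univ, Finset.mem_insert,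
        Finset.mem_singleton, true_and, not_or] at hx
      have hx1 : x + 1 ≠ 0 := by
        intro hc; exact hx.2 (by linear_combination hc)
      rw [Multiset.mem_toFinset, Polynomial.mem_roots hP0]
      simp only [Polynomial.IsRoot, hP, Polynomial.eval_add, Polynomial.eval_pow,
        Polynomial.eval_X, Polynomial.eval_one]
      exact key x hx.1 hx1
    have hcard2 : P.roots.toFinset.card ≤ 2 := by
      calc P.roots.toFinset.card ≤ Multiset.card P.roots := P.roots.toFinset_card_le
        _ ≤ P.natDegree := P.card_roots'
        _ ≤ 2 := hdeg
    have h2 : ({(0 : F), -1} : Finset F).card ≤ 2 :=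
      (Finset.card_insert_le _ _).trans (by simp)
    have hge : (Finset.univ : Finset F).card - ({(0 : F), -1} : Finset F).card ≤
        ((Finset.univ : Finset F) \ {(0 : F), -1}).card :=
      Finset.le_card_sdiff ({(0 : F), -1} : Finset F) Finset.univ
    have hu : (Finset.univ : Finset F).card = p ^ n := by
      rw [← hcard]; rfl
    have hle := Finset.card_le_card hsub
    omega
end

section
/- For a prime power q = p^n with q > 4, the n + 1 integers 1, p, p², …, p^{n−1}, p^n − 2 are pairwise distinct, each less than q − 1, and each coprime to q − 1; consequently φ(q − 1) > n. -/
theorem stmt_14 (p n : ℕ) (hp : p.Prime) (hq : 4 < p ^ n) :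
    ((Finset.range n).image (p ^ ·) ∪ {p ^ n - 2}).card = n + 1 ∧
    (∀ m ∈ (Finset.range n).image (p ^ ·) ∪ {p ^ n - 2},
      m < p ^ n - 1 ∧ Nat.Coprime m (p ^ n - 1)) ∧
    n < Nat.totient (p ^ n - 1) := by
  have hp2 : 2 ≤ p := hp.two_le
  have hn : 1 ≤ n := by
    rcases Nat.eq_zero_or_pos n with h | h
    · subst h; simp at hq
    · exact h
  have hbound : ∀ i, i < n → 2 * p ^ i ≤ p ^ n := by
    intro i hi
    calc 2 * p ^ i ≤ p * p ^ i := Nat.mul_le_mul_right _ hp2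
    _ = p ^ (i + 1) := by ring
    _ ≤ p ^ n := Nat.pow_le_pow_right hp.pos hi
  have hone : ∀ i : ℕ, 1 ≤ p ^ i := fun i => Nat.one_le_pow _ _ hp.pos
  have hnotmem : p ^ n - 2 ∉ (Finset.range n).image (p ^ ·) := by
    simp only [Finset.mem_image, Finset.mem_range, not_exists]
    rintro i ⟨hi, heq⟩
    have h1 := hbound i hi
    have h2 := hone i
    omega
  have hcop : ∀ i, Nat.Coprime (p ^ i) (p ^ n - 1) := by
    intro i
    apply Nat.Coprime.pow_left
    rw [hp.coprime_iff_not_dvd]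
    intro h
    have hd : p ∣ p ^ n := dvd_pow_self p (by omega)
    have := Nat.dvd_sub hd h
    have he : p ^ n - (p ^ n - 1) = 1 := by omega
    rw [he] at this
    exact Nat.Prime.one_lt hp |>.ne' (Nat.eq_one_of_dvd_one this) |>.elim
  have key : ∀ m ∈ (Finset.range n).image (p ^ ·) ∪ {p ^ n - 2},
      m < p ^ n - 1 ∧ Nat.Coprime m (p ^ n - 1) := by
    intro m hm
    simp only [Finset.mem_union, Finset.mem_image, Finset.mem_range,
      Finset.mem_singleton] at hm
    rcases hm with ⟨i, hi, rfl⟩ | rfl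
    · have h1 := hbound i hi
      have h2 := hone i
      exact ⟨by omega, hcop i⟩
    · refine ⟨by omega, ?_⟩
      have he : p ^ n - 1 = (p ^ n - 2) + 1 := by omega
      rw [he, show (p ^ n - 2) + 1 = 1 + (p ^ n - 2) by omega,
        Nat.coprime_add_self_right]
      exact Nat.coprime_one_right _
  have hcard : ((Finset.range n).image (p ^ ·) ∪ {p ^ n - 2}).card = n + 1 := by
    rw [Finset.card_union_of_disjoint (Finset.disjoint_singleton_right.mpr hnotmem),
      Finset.card_image_of_injective _ (Nat.pow_right_injective hp2),
      Finset.card_range, Finset.card_singleton]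
  refine ⟨hcard, key, ?_⟩
  have hsub : (Finset.range n).image (p ^ ·) ∪ {p ^ n - 2} ⊆
      (Finset.range (p ^ n - 1)).filter (p ^ n - 1).Coprime := by
    intro m hm
    rw [Finset.mem_filter, Finset.mem_range]
    exact ⟨(key m hm).1, (key m hm).2.symm⟩
  have h2 : n + 1 ≤ Nat.totient (p ^ n - 1) := by
    rw [Nat.totient]
    exact hcard ▸ Finset.card_le_card hsub
  omega
end

section
/- Let g be a finite-dimensional Lie algebra over an infinite field K, and let a, b ∈ g with C(a) ∩ C(b) = {0}. Then the set U(a) = {y ∈ g : C(a) ∩ C(y) = {0}} contains a Zariski-dense open subset of g; in particular, for any finite-dimensional Lie algebra satisfying the C-condition, the set of y such that C(a) ∩ C(y) = 0 for the fixed a is Zariski dense. -/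
/-!
In the basis `B`, the map `z ↦ (⁅a, z⁆, ⁅y, z⁆)` has a matrix whose entries are polynomials
(of degree at most one) in the coordinates of `y`. It is injective at `y = b`, so some maximal
minor of it is nonzero there; that minor, as a polynomial in `y`, is `P`, and wherever it does
not vanish the map stays injective.
-/

open Matrix MvPolynomial

namespace Matrix

theorem exists_map_eval_eq_of_linearMap {R σ m n : Type*} [CommSemiring R] [Fintype σ]
    [DecidableEq σ] (ψ : (σ → R) →ₗ[R] Matrix m n R) :
    ∃ A : Matrix m n (MvPolynomial σ R), ∀ y, A.map (eval y) = ψ y := by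
  refine ⟨of fun i j => ∑ k, C (ψ (Pi.single k 1) i j) * X k, fun y => ?_⟩
  ext i j
  conv_rhs => rw [pi_eq_sum_univ' y]
  simp [mul_comm, Matrix.sum_apply]

variable {K m n : Type*} [Field K] [Fintype m] [Fintype n] [DecidableEq n]

theorem mulVec_injective_iff_exists_det_submatrix_ne_zero (M : Matrix m n K) :
    Function.Injective M.mulVec ↔ ∃ r : n → m, (M.submatrix r id).det ≠ 0 := by
  constructor
  · intro hM
    obtain ⟨κ, a, ha, hspan, hli⟩ := exists_linearIndependent' K M.row
    have : Fintype κ := Fintype.ofInjective a ha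
    have hcard : Fintype.card n = Fintype.card κ := by
      rw [linearIndependent_iff_card_eq_finrank_span.mp hli, Set.finrank, hspan,
        ← rank_eq_finrank_span_row, rank, LinearMap.finrank_range_of_inj hM,
        Module.finrank_fintype_fun_eq_card]
    let e : n ≃ κ := Fintype.equivOfCardEq hcard
    refine ⟨a ∘ e, ?_⟩
    have hrows : LinearIndependent K (M.submatrix (a ∘ e) id).row := hli.comp e e.injective
    exact ((isUnit_iff_isUnit_det _).mp (linearIndependent_rows_iff_isUnit.mp hrows)).ne_zero
  · rintro ⟨r, hr⟩ v w hvw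
    have hunit : IsUnit (M.submatrix r id) := (isUnit_iff_isUnit_det _).mpr hr.isUnit
    have hsub : ∀ u, M.submatrix r id *ᵥ u = (M *ᵥ u) ∘ r := fun _ => rfl
    exact mulVec_injective_iff_isUnit.mpr hunit (by rw [hsub, hsub, hvw])

theorem exists_map_ne_zero_forall_map_mulVec_injective {R : Type*} [CommRing R]
    (A : Matrix m n R) (φ₀ : R →+* K) (h₀ : Function.Injective (A.map φ₀).mulVec) :
    ∃ P : R, φ₀ P ≠ 0 ∧ ∀ φ : R →+* K, φ P ≠ 0 → Function.Injective (A.map φ).mulVec := by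
  obtain ⟨r, hr⟩ := (mulVec_injective_iff_exists_det_submatrix_ne_zero _).mp h₀
  have hdet : ∀ φ : R →+* K, φ (A.submatrix r id).det = ((A.map φ).submatrix r id).det :=
    fun φ => φ.map_det _
  refine ⟨(A.submatrix r id).det, by rwa [hdet], fun φ hφ => ?_⟩
  exact (mulVec_injective_iff_exists_det_submatrix_ne_zero _).mpr ⟨r, by rwa [← hdet]⟩

end Matrix

theorem LinearMap.fromRows_toMatrix_mulVec_injective_iff {R M N₁ N₂ ι ι₁ ι₂ : Type*}
    [CommRing R] [AddCommGroup M] [AddCommGroup N₁] [AddCommGroup N₂] [Module R M]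
    [Module R N₁] [Module R N₂] [Fintype ι] [Finite ι₁] [Finite ι₂] [DecidableEq ι]
    (b : Module.Basis ι R M) (b₁ : Module.Basis ι₁ R N₁) (b₂ : Module.Basis ι₂ R N₂)
    (f₁ : M →ₗ[R] N₁) (f₂ : M →ₗ[R] N₂) :
    Function.Injective (fromRows (toMatrix b b₁ f₁) (toMatrix b b₂ f₂)).mulVec ↔
      ∀ x, f₁ x = 0 → f₂ x = 0 → x = 0 := by
  have key : ∀ x, fromRows (toMatrix b b₁ f₁) (toMatrix b b₂ f₂) *ᵥ b.repr x =
      Sum.elim (b₁.repr (f₁ x)) (b₂.repr (f₂ x)) := by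
    simp [fromRows_mulVec, toMatrix_mulVec_repr]
  rw [← Matrix.coe_mulVecLin, injective_iff_map_eq_zero]
  constructor
  · intro h x h₁ h₂
    simpa using h (b.repr x) (by rw [Matrix.mulVecLin_apply, key, h₁, h₂]; simp)
  · intro h v hv
    obtain ⟨x, rfl⟩ : ∃ x, ⇑(b.repr x) = v := ⟨b.equivFun.symm v, b.equivFun.apply_symm_apply v⟩
    rw [Matrix.mulVecLin_apply, key, ← Sum.elim_zero_zero, Sum.elim_eq_iff] at hv
    simp only [Finsupp.coe_eq_zero, LinearEquiv.map_eq_zero_iff] at hv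
    simp [h x hv.1 hv.2]

theorem stmt_15_general (K : Type*) [Field K]
    (g : Type*) [LieRing g] [LieAlgebra K g]
    (d : ℕ) (B : Module.Basis (Fin d) K g) (a b : g)
    (hab : ∀ c : g, ⁅a, c⁆ = 0 → ⁅b, c⁆ = 0 → c = 0) :
    ∃ P : MvPolynomial (Fin d) K, P ≠ 0 ∧
      ∀ y : Fin d → K, MvPolynomial.eval y P ≠ 0 →
        ∀ c : g, ⁅a, c⁆ = 0 → ⁅∑ i, y i • B i, c⁆ = 0 → c = 0 := by
  obtain ⟨adGeneric, hadGeneric⟩ := exists_map_eval_eq_of_linearMap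
    ((LinearMap.toMatrix B B).toLinearMap ∘ₗ (LieAlgebra.ad K g : g →ₗ[K] Module.End K g) ∘ₗ
      B.equivFun.symm.toLinearMap)
  let A := fromRows ((LinearMap.toMatrix B B (LieAlgebra.ad K g a)).map C) adGeneric
  have hA : ∀ y, Function.Injective (A.map (eval y)).mulVec ↔
      ∀ c : g, ⁅a, c⁆ = 0 → ⁅∑ i, y i • B i, c⁆ = 0 → c = 0 := by
    intro y
    have hevalC : ⇑(eval y) ∘ C = id := funext fun _ => eval_C _
    rw [fromRows_map, hadGeneric, Matrix.map_map, hevalC, Matrix.map_id]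
    simpa only [LinearMap.coe_comp, LinearEquiv.coe_coe, Function.comp_apply,
      Module.Basis.equivFun_symm_apply, LieHom.coe_toLinearMap, LieAlgebra.ad_apply] using
      LinearMap.fromRows_toMatrix_mulVec_injective_iff B B B
        (LieAlgebra.ad K g a) (LieAlgebra.ad K g (∑ i, y i • B i))
  obtain ⟨P, hP₀, hP⟩ := exists_map_ne_zero_forall_map_mulVec_injective A (eval (B.repr b))
    ((hA _).2 (by rwa [B.sum_repr]))
  exact ⟨P, fun h => hP₀ (by rw [h, map_zero]), fun y hy => (hA y).1 (hP _ hy)⟩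

theorem stmt_15 (K : Type*) [Field K] [Infinite K]
    (g : Type*) [LieRing g] [LieAlgebra K g] [FiniteDimensional K g]
    (d : ℕ) (B : Module.Basis (Fin d) K g) (a b : g)
    (hab : ∀ c : g, ⁅a, c⁆ = 0 → ⁅b, c⁆ = 0 → c = 0) :
    ∃ P : MvPolynomial (Fin d) K, P ≠ 0 ∧
      ∀ y : Fin d → K, MvPolynomial.eval y P ≠ 0 →
        ∀ c : g, ⁅a, c⁆ = 0 → ⁅∑ i, y i • B i, c⁆ = 0 → c = 0 :=
  stmt_15_general K g d B a b hab
end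

section
/- Let K be a field with at least 3 elements and g a Lie algebra over K with [g,g] ≠ g. Then there exists a Lie algebra s over K and an injective map β : g → s satisfying β([x,y]) = [β(x), β(y)] for all x, y ∈ g, which is not additive. -/
/-!
A linear functional `f` that is nonzero but kills `[g, g]` exists because `[g, g] ≠ g`.
Composing it with a non-additive `γ : K → K` satisfying `γ 0 = 0` (which needs `|K| ≥ 3`) gives
`h = γ ∘ f`, which vanishes on brackets yet is not additive. In `g × K`, with `K` the abelian
one-dimensional Lie algebra, the graph map `x ↦ (x, h x)` is then injective and preserves
brackets, since the second component of every bracket is `0`, but it is not additive.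
-/

theorem exists_not_additive_of_three_le_mk {R : Type*} [Ring R] [Nontrivial R]
    (hR : 3 ≤ Cardinal.mk R) :
    ∃ γ : R → R, γ 0 = 0 ∧ ¬ ∀ a b, γ (a + b) = γ a + γ b := by
  classical
  obtain ⟨c, hc0, hc1⟩ := Cardinal.exists_ne_ne_of_three_le hR 0 1
  refine ⟨fun a => if a = 1 then 1 else 0, if_neg zero_ne_one, fun hadd => ?_⟩
  have h1c : (1 : R) + c ≠ 1 := by simpa using hc0
  simpa [h1c, hc1] using hadd 1 c

theorem not_additive_comp_of_surjective {M N P F : Type*} [Add M] [Add N] [Add P]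
    [FunLike F M N] [AddHomClass F M N] {f : F} (hf : Function.Surjective f) {γ : N → P}
    (hγ : ¬ ∀ a b, γ (a + b) = γ a + γ b) :
    ¬ ∀ x y, (γ ∘ f) (x + y) = (γ ∘ f) x + (γ ∘ f) y := by
  intro hadd
  refine hγ fun a b => ?_
  obtain ⟨x, rfl⟩ := hf a
  obtain ⟨y, rfl⟩ := hf b
  simpa using hadd x y

theorem LieAlgebra.exists_surjective_linearMap_lie_eq_zero {K L : Type*} [Field K] [LieRing L]
    [LieAlgebra K L] (hL : ⁅(⊤ : LieIdeal K L), (⊤ : LieIdeal K L)⁆ ≠ ⊤) :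
    ∃ f : L →ₗ[K] K, Function.Surjective f ∧ ∀ x y : L, f ⁅x, y⁆ = 0 := by
  have hlt : LieSubmodule.toSubmodule (⁅⊤, ⊤⁆ : LieIdeal K L) < ⊤ :=
    lt_top_iff_ne_top.mpr fun h => hL ((LieSubmodule.toSubmodule_eq_top _).mp h)
  obtain ⟨f, hf0, hker⟩ := Submodule.exists_le_ker_of_lt_top _ hlt
  exact ⟨f, f.surjective_or_eq_zero.resolve_right hf0, fun x y =>
    hker (LieSubmodule.lie_mem_lie (LieSubmodule.mem_top x) (LieSubmodule.mem_top y))⟩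

section GraphMap

variable {L A : Type*} [LieRing L] [LieRing A]

theorem LieAlgebra.Prod.mk_lie_eq_lie_mk [IsLieAbelian A] {h : L → A}
    (hh : ∀ x y : L, h ⁅x, y⁆ = 0) (x y : L) : (⁅x, y⁆, h ⁅x, y⁆) = ⁅(x, h x), (y, h y)⁆ := by
  simp [hh, trivial_lie_zero]

theorem LieAlgebra.Prod.not_additive_mk_of_not_additive {h : L → A}
    (hh : ¬ ∀ x y : L, h (x + y) = h x + h y) :
    ¬ ∀ x y : L, ((x + y, h (x + y)) : L × A) = (x, h x) + (y, h y) := by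
  simpa [Prod.ext_iff] using hh

end GraphMap

theorem stmt_18 (K : Type u) [Field K] (hK : 3 ≤ Cardinal.mk K)
    (g : Type u) [LieRing g] [LieAlgebra K g]
    (hproper : ⁅(⊤ : LieIdeal K g), (⊤ : LieIdeal K g)⁆ ≠ ⊤) :
    ∃ (s : Type u) (_ : LieRing s) (_ : LieAlgebra K s) (β : g → s),
      Function.Injective β ∧ (∀ x y : g, β ⁅x, y⁆ = ⁅β x, β y⁆) ∧
      ¬ (∀ x y : g, β (x + y) = β x + β y) := by
  let : LieRing K := LieRing.ofAssociativeRing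
  have : IsLieAbelian K := isMulCommutative_iff_isLieAbelian.mp inferInstance
  obtain ⟨f, hf_surj, hf_lie⟩ := LieAlgebra.exists_surjective_linearMap_lie_eq_zero hproper
  obtain ⟨γ, hγ0, hγ⟩ := exists_not_additive_of_three_le_mk hK
  refine ⟨g × K, inferInstance, inferInstance, fun x => (x, (γ ∘ f) x),
    fun x y hxy => congrArg Prod.fst hxy, ?_, ?_⟩
  · exact LieAlgebra.Prod.mk_lie_eq_lie_mk fun x y => by simp [hf_lie, hγ0]
  · exact LieAlgebra.Prod.not_additive_mk_of_not_additive
      (not_additive_comp_of_surjective hf_surj hγ)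
end
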